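/- arXiv:1711.11545 — 6 statements merged into one kernel-verified Lean document; each statement's English description precedes it below -/
import Mathlib

section
/- Let n be a Lie algebra over a field K and h an ideal of n. Then there exists a Lie subalgebra m of n such that m + h = n and m ∩ h ⊆ [n,n]. -/
/-- for a Lie algebra `L` over a field `K` and an ideal `h` of `L`, there
is a Lie subalgebra `m` with `m + h = L` and `m ∩ h ⊆ [L,L]` (the span of all brackets). -/
theorem stmt_4 (K : Type*) [Field K] (L : Type*) [LieRing L] [LieAlgebra K L]
    (h : LieIdeal K L) :
    ∃ m : LieSubalgebra K L,
      m.toSubmodule ⊔ h.toSubmodule = ⊤ ∧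
      m.toSubmodule ⊓ h.toSubmodule ≤
        Submodule.span K {z : L | ∃ a b : L, ⁅a, b⁆ = z} := by
  set D : Submodule K L := Submodule.span K {z : L | ∃ a b : L, ⁅a, b⁆ = z} with hD
  obtain ⟨c, hc⟩ := Submodule.exists_isCompl (h.toSubmodule ⊔ D)
  refine ⟨⟨c ⊔ D, ?_⟩, ?_, ?_⟩
  · intro x y _ _
    exact Submodule.mem_sup_right (Submodule.subset_span ⟨x, y, rfl⟩)
  · rw [eq_top_iff, ← hc.sup_eq_top]
    refine sup_le (sup_le ?_ ?_) ?_
    · exact le_sup_right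
    · exact le_sup_of_le_left le_sup_right
    · exact le_sup_of_le_left le_sup_left
  · intro x hx
    obtain ⟨hx1, hx2⟩ := hx
    obtain ⟨a, ha, d, hd, rfl⟩ := Submodule.mem_sup.mp hx1
    have haz : a = 0 := by
      have : a ∈ (h.toSubmodule ⊔ D) ⊓ c := by
        constructor
        · have : a = (a + d) - d := by abel
          rw [this]
          exact Submodule.sub_mem _ (Submodule.mem_sup_left hx2) (Submodule.mem_sup_right hd)
        · exact ha
      simpa [hc.inf_eq_bot] using this
    simpa [haz] using hd
end

section
/- Let K be a field, 2 ≤ k ≤ n, and let J be a nilpotent n×n matrix over K such that J_{i+1,i} ≠ 0 for all 1 ≤ i ≤ k−1, and J_{j,i} = 0 for all 1 ≤ i ≤ k−1 and j > i+1. Then the largest Jordan block of J has size at least k; equivalently J^{k−1} ≠ 0 and the largest part of the Jordan type of J is ≥ k. -/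
/-- The nilpotent Jordan block of size `m`: ones on the superdiagonal. -/
def jordanBlock (K : Type*) [Zero K] [One K] (m : ℕ) : Matrix (Fin m) (Fin m) K :=
  Matrix.of fun i j => if (i : ℕ) + 1 = (j : ℕ) then 1 else 0

/-- `J` has Jordan type `lam`. -/
def HasJordanType {K : Type*} [Field K] {ι : Type*} [Fintype ι] [DecidableEq ι]
    (J : Matrix ι ι K) {m : ℕ} (lam : Fin m → ℕ) : Prop :=
  ∃ (e : ι ≃ (Σ i : Fin m, Fin (lam i))) (P : Matrix ι ι K),
    IsUnit P.det ∧
    J * P = P * ((Matrix.blockDiagonal' (fun i => jordanBlock K (lam i))).submatrix e e)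

lemma jordanBlock_pow (K : Type*) [Field K] (m t : ℕ) :
    jordanBlock K m ^ t = Matrix.of fun i j : Fin m => if (i : ℕ) + t = (j : ℕ) then 1 else 0 := by
  induction t with
  | zero =>
    ext i j
    simp [Matrix.one_apply, Fin.ext_iff, eq_comm]
  | succ t ih =>
    ext i j
    rw [pow_succ, ih]
    simp only [Matrix.mul_apply, Matrix.of_apply, jordanBlock]
    by_cases h : (i : ℕ) + t < m
    · rw [Finset.sum_eq_single (⟨(i : ℕ) + t, h⟩ : Fin m)]
      · have h1 : (((⟨(i : ℕ) + t, h⟩ : Fin m)) : ℕ) = (i : ℕ) + t := rfl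
        rw [h1, if_pos rfl, one_mul, add_assoc]
      · intro b _ hb
        have : (i : ℕ) + t ≠ (b : ℕ) := fun hc => hb (by simp [Fin.ext_iff, hc.symm])
        simp [this]
      · simp
    · have h0 : ∀ l : Fin m, ((if (i : ℕ) + t = (l : ℕ) then (1:K) else 0) *
          (if (l : ℕ) + 1 = (j : ℕ) then 1 else 0)) = 0 := by
        intro l
        have : (i : ℕ) + t ≠ (l : ℕ) := by have := l.isLt; omega
        simp [this]
      rw [Finset.sum_congr rfl fun l _ => h0 l, Finset.sum_const_zero]
      have : (i : ℕ) + (t + 1) ≠ (j : ℕ) := by have := j.isLt; omega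
      simp [this]

lemma jordanBlock_pow_eq_zero (K : Type*) [Field K] {m t : ℕ} (h : m ≤ t) :
    jordanBlock K m ^ t = 0 := by
  rw [jordanBlock_pow]
  ext i j
  have : (i : ℕ) + t ≠ (j : ℕ) := by have := j.isLt; omega
  simp [this]

/-- if the first `k-1` subdiagonal entries of a nilpotent matrix `J` are
nonzero and the entries below the subdiagonal in the first `k-1` columns vanish, then
`J^(k-1) ≠ 0` and the largest part of the Jordan type of `J` is at least `k`.
(Indices are 0-based: column `i` of the statement is column `i-1` here.) -/
theorem stmt_10 (K : Type*) [Field K] (n k : ℕ) (hk2 : 2 ≤ k) (hkn : k ≤ n)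
    (J : Matrix (Fin n) (Fin n) K) (hnil : IsNilpotent J)
    (hsub : ∀ i j : Fin n, (i : ℕ) < k - 1 → (j : ℕ) = (i : ℕ) + 1 → J j i ≠ 0)
    (hlow : ∀ i j : Fin n, (i : ℕ) < k - 1 → (i : ℕ) + 1 < (j : ℕ) → J j i = 0) :
    J ^ (k - 1) ≠ 0 ∧
      ∀ (m : ℕ) (lam : Fin m → ℕ), HasJordanType J lam → ∃ i, k ≤ lam i := by
  have hn0 : 0 < n := by omega
  -- key: entries of J^t in column 0
  have key : ∀ t, t ≤ k - 1 →
      (∀ j : Fin n, t < (j : ℕ) → (J ^ t) j ⟨0, hn0⟩ = 0) ∧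
        ∀ ht : t < n, (J ^ t) ⟨t, ht⟩ ⟨0, hn0⟩ ≠ 0 := by
    intro t
    induction t with
    | zero =>
      intro _
      constructor
      · intro j hj
        rw [pow_zero, Matrix.one_apply_ne]
        intro hc; rw [hc] at hj; simp at hj
      · intro ht
        rw [pow_zero, Matrix.one_apply_eq]
        exact one_ne_zero
    | succ t ih =>
      intro hle
      obtain ⟨ih1, ih2⟩ := ih (by omega)
      have htn : t < n := by omega
      have hstep : ∀ j : Fin n, (J ^ (t + 1)) j ⟨0, hn0⟩ =
          ∑ l : Fin n, J j l * (J ^ t) l ⟨0, hn0⟩ := by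
        intro j
        rw [pow_succ']
        exact Matrix.mul_apply
      constructor
      · intro j hj
        rw [hstep]
        apply Finset.sum_eq_zero
        intro l _
        by_cases hl : t < (l : ℕ)
        · rw [ih1 l hl, mul_zero]
        · rw [hlow l j (by omega) (by omega), zero_mul]
      · intro hst
        rw [hstep]
        rw [Finset.sum_eq_single (⟨t, htn⟩ : Fin n)]
        · exact mul_ne_zero (hsub ⟨t, htn⟩ ⟨t + 1, hst⟩ (by simpa using by omega) rfl)
            (ih2 htn)
        · intro l _ hl
          by_cases h' : t < (l : ℕ)
          · rw [ih1 l h', mul_zero]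
          · have : (l : ℕ) < t := by
              rcases lt_or_eq_of_le (not_lt.mp h') with h | h
              · exact h
              · exact absurd (Fin.ext h : l = ⟨t, htn⟩) hl
            rw [hlow l ⟨t + 1, hst⟩ (by omega) (by simpa using by omega), zero_mul]
        · simp
  have hk1n : k - 1 < n := by omega
  have hJpow : J ^ (k - 1) ≠ 0 := by
    intro hc
    exact (key (k - 1) le_rfl).2 hk1n (by rw [hc]; rfl)
  refine ⟨hJpow, ?_⟩
  rintro m lam ⟨e, P, hP, hJP⟩
  by_contra hcon
  push_neg at hcon
  set D := (Matrix.blockDiagonal' (fun i => jordanBlock K (lam i))).submatrix e e with hD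
  have commpow : ∀ t, J ^ t * P = P * D ^ t := by
    intro t
    induction t with
    | zero => simp
    | succ t ih =>
      rw [pow_succ', pow_succ', mul_assoc, ih, ← mul_assoc, hJP, mul_assoc]
  have hDpow : D ^ (k - 1) = 0 := by
    have hblock : (Matrix.blockDiagonal' (fun i => jordanBlock K (lam i))) ^ (k - 1) =
        0 := by
      rw [← Matrix.blockDiagonal'_pow]
      have : (fun i => jordanBlock K (lam i)) ^ (k - 1) = fun _ => 0 := by
        funext i
        rw [Pi.pow_apply]
        exact jordanBlock_pow_eq_zero K (by have := hcon i; omega)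
      rw [this]
      exact Matrix.blockDiagonal'_zero
    have : D ^ (k - 1) =
        ((Matrix.blockDiagonal' (fun i => jordanBlock K (lam i))) ^ (k - 1)).submatrix e e := by
      rw [hD]
      induction (k - 1) with
      | zero => simp [Matrix.submatrix_one_equiv]
      | succ t ih => rw [pow_succ, pow_succ, ih, Matrix.submatrix_mul_equiv]
    rw [this, hblock]
    ext i j
    simp
  have : J ^ (k - 1) * P = 0 := by rw [commpow, hDpow, mul_zero]
  have hPinv := Matrix.mul_nonsing_inv P hP
  have : J ^ (k - 1) = 0 := by
    calc J ^ (k - 1) = J ^ (k - 1) * (P * P⁻¹) := by rw [hPinv, mul_one]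
    _ = (J ^ (k - 1) * P) * P⁻¹ := by rw [mul_assoc]
    _ = 0 := by rw [this, zero_mul]
  exact hJpow this
end

section
/- Let n_1, …, n_m be positive integers summing to N and let μ be the conjugate (transpose) of the partition obtained by sorting (n_1, …, n_m) in decreasing order. Then there exists a nilpotent N×N matrix X over any field which is strictly block upper triangular with respect to blocks of sizes n_1, …, n_m (in this order) and whose Jordan type is exactly μ. -/
/-! Index the basis by the cells of the diagram whose `i`-th row has `n_i` cells, and let `X`
have the columns of the diagram, read from top to bottom, as its Jordan chains. Column `k`
consists of the rows with `n_i > k`, so the chains have lengths `μ`; consecutive cells of a column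
lie in rows `i < i'`, so every nonzero entry of `X` lies in a block `(i, i')` with `i < i'`.
No sorting of the `n_i` is needed. -/

open Matrix Finset

theorem jordanBlock_pow_apply (K : Type*) [Semiring K] (n p : ℕ) (i j : Fin n) :
    (jordanBlock K n ^ p) i j = if (i : ℕ) + p = j then 1 else 0 := by
  induction p generalizing j with
  | zero => simp [one_apply, Fin.ext_iff]
  | succ p ih =>
    rw [pow_succ, mul_apply]
    simp only [ih]
    simp only [jordanBlock, of_apply, ite_mul, one_mul, zero_mul]
    by_cases hp : (i : ℕ) + p < n
    · rw [Fintype.sum_eq_single ⟨(i : ℕ) + p, hp⟩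
        fun k hk => if_neg fun h => hk (Fin.ext (Eq.symm h))]
      simp only [if_true, add_assoc]
    · rw [sum_eq_zero fun k _ => if_neg (by omega), if_neg (by omega)]

theorem jordanBlock_pow_of_le (K : Type*) [Semiring K] {n p : ℕ} (h : n ≤ p) :
    jordanBlock K n ^ p = 0 := by
  ext i j
  rw [jordanBlock_pow_apply, if_neg (by omega), Matrix.zero_apply]

theorem isNilpotent_blockDiagonal'_jordanBlock (K : Type*) [Semiring K] {κ : Type*}
    [Fintype κ] [DecidableEq κ] (lam : κ → ℕ) :
    IsNilpotent (blockDiagonal' fun k => jordanBlock K (lam k)) :=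
  ⟨univ.sup lam, by
    rw [← blockDiagonal'_pow, ← blockDiagonal'_zero]
    exact congrArg _ (funext fun k => jordanBlock_pow_of_le K (le_sup (mem_univ k)))⟩

theorem IsNilpotent.submatrix_equiv {R m n : Type*} [Semiring R] [Fintype m] [Fintype n]
    [DecidableEq m] [DecidableEq n] {A : Matrix n n R} (hA : IsNilpotent A) (e : m ≃ n) :
    IsNilpotent (A.submatrix e e) :=
  hA.map (reindexRingEquiv R e.symm)

section Diagram

variable {ι : Type*} [Fintype ι] (nn : ι → ℕ)

def diagramColumn (k : ℕ) : Finset ι :=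
  univ.filter fun i => k + 1 ≤ nn i

theorem mem_diagramColumn {k : ℕ} {i : ι} : i ∈ diagramColumn nn k ↔ k < nn i := by
  simp [diagramColumn]

variable [LinearOrder ι]

def diagramColumnIso (k : ℕ) : Fin (diagramColumn nn k).card ≃o diagramColumn nn k :=
  (diagramColumn nn k).orderIsoOfFin rfl

def diagramCellEquiv {N : ℕ} (hN : ∀ i, nn i ≤ N) :
    (Σ i, Fin (nn i)) ≃ Σ k : Fin N, Fin (diagramColumn nn k).card where
  toFun p := ⟨⟨p.2, p.2.2.trans_le (hN p.1)⟩,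
    (diagramColumnIso nn p.2).symm ⟨p.1, (mem_diagramColumn nn).2 p.2.2⟩⟩
  invFun q := ⟨diagramColumnIso nn q.1 q.2,
    ⟨q.1, (mem_diagramColumn nn).1 (diagramColumnIso nn q.1 q.2).2⟩⟩
  left_inv := by
    rintro ⟨i, k⟩
    have hi : (diagramColumnIso nn k ((diagramColumnIso nn k).symm
        ⟨i, (mem_diagramColumn nn).2 k.2⟩) : ι) = i := by simp
    exact Sigma.ext hi ((Fin.heq_ext_iff (congrArg nn hi)).2 rfl)
  right_inv := by
    rintro ⟨k, a⟩
    refine Sigma.ext rfl (heq_of_eq ?_)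
    simp

variable (K : Type*) {N : ℕ} (hN : ∀ i, nn i ≤ N)

def columnJordanMatrix [Zero K] [One K] :
    Matrix (Σ k : Fin N, Fin (diagramColumn nn k).card)
      (Σ k : Fin N, Fin (diagramColumn nn k).card) K :=
  blockDiagonal' fun k => jordanBlock K (diagramColumn nn k).card

theorem diagramCellEquiv_symm_lt_of_columnJordanMatrix_ne_zero [Zero K] [One K]
    {r s : Σ k : Fin N, Fin (diagramColumn nn k).card} (h : columnJordanMatrix nn K r s ≠ 0) :
    ((diagramCellEquiv nn hN).symm r).1 < ((diagramCellEquiv nn hN).symm s).1 := by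
  obtain ⟨k, a⟩ := r
  obtain ⟨l, b⟩ := s
  obtain rfl : k = l := by
    by_contra hkl
    exact h (blockDiagonal'_apply_ne _ _ _ hkl)
  rw [columnJordanMatrix, blockDiagonal'_apply_eq] at h
  have hab : (a : ℕ) + 1 = b := by
    by_contra hab
    exact h (if_neg hab)
  exact (diagramColumnIso nn k).strictMono (show a < b by omega)

def diagramJordanMatrix [Zero K] [One K] : Matrix (Σ i, Fin (nn i)) (Σ i, Fin (nn i)) K :=
  (columnJordanMatrix nn K).submatrix (diagramCellEquiv nn hN) (diagramCellEquiv nn hN)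

theorem lt_of_diagramJordanMatrix_ne_zero [Zero K] [One K] {p q : Σ i, Fin (nn i)}
    (h : diagramJordanMatrix nn K hN p q ≠ 0) : p.1 < q.1 := by
  simpa using diagramCellEquiv_symm_lt_of_columnJordanMatrix_ne_zero nn K hN
    (r := diagramCellEquiv nn hN p) (s := diagramCellEquiv nn hN q) h

theorem diagramJordanMatrix_apply_of_le [Zero K] [One K] {p q : Σ i, Fin (nn i)}
    (hqp : q.1 ≤ p.1) : diagramJordanMatrix nn K hN p q = 0 := by
  by_contra h
  exact (lt_of_diagramJordanMatrix_ne_zero nn K hN h).not_ge hqp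

theorem isNilpotent_diagramJordanMatrix [Semiring K] : IsNilpotent (diagramJordanMatrix nn K hN) :=
  (isNilpotent_blockDiagonal'_jordanBlock K _).submatrix_equiv _

theorem hasJordanType_diagramJordanMatrix [Field K] :
    HasJordanType (diagramJordanMatrix nn K hN) fun k : Fin N => (diagramColumn nn k).card :=
  ⟨diagramCellEquiv nn hN, 1, by simp, by rw [mul_one, one_mul]; rfl⟩

end Diagram

theorem stmt_12_general (K : Type*) [Field K] (m N : ℕ) (nn : Fin m → ℕ)
    (hsum : ∑ i, nn i = N) :
    ∃ X : Matrix (Σ i : Fin m, Fin (nn i)) (Σ i : Fin m, Fin (nn i)) K,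
      (∀ p q : Σ i : Fin m, Fin (nn i), q.1 ≤ p.1 → X p q = 0) ∧ IsNilpotent X ∧
      HasJordanType X
        (fun j : Fin N => (Finset.univ.filter fun i : Fin m => (j : ℕ) + 1 ≤ nn i).card) := by
  have hN : ∀ i, nn i ≤ N := fun i =>
    hsum ▸ single_le_sum (fun j _ => (nn j).zero_le) (mem_univ i)
  exact ⟨diagramJordanMatrix nn K hN, fun _ _ => diagramJordanMatrix_apply_of_le nn K hN,
    isNilpotent_diagramJordanMatrix nn K hN, hasJordanType_diagramJordanMatrix nn K hN⟩

/-- there is a nilpotent strictly block upper triangular matrix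
(blocks of sizes `nn 0, …, nn (m-1)`) whose Jordan type is exactly the conjugate `μ` of
the sorted tuple `nn`, where `μ_j = #{i : nn i ≥ j}` (padded with zero parts). -/
theorem stmt_12 (K : Type*) [Field K] (m N : ℕ) (nn : Fin m → ℕ)
    (hpos : ∀ i, 0 < nn i) (hsum : ∑ i, nn i = N) :
    ∃ X : Matrix (Σ i : Fin m, Fin (nn i)) (Σ i : Fin m, Fin (nn i)) K,
      (∀ p q : Σ i : Fin m, Fin (nn i), q.1 ≤ p.1 → X p q = 0) ∧ IsNilpotent X ∧
      HasJordanType X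
        (fun j : Fin N => (Finset.univ.filter fun i : Fin m => (j : ℕ) + 1 ≤ nn i).card) :=
  stmt_12_general K m N nn hsum
end

section
/- Let n_1, …, n_m be positive integers summing to N and let μ be the conjugate of the partition obtained by sorting (n_1, …, n_m) in decreasing order. Then for every nilpotent N×N matrix X over a field which is strictly block upper triangular with respect to blocks of sizes n_1, …, n_m, the Jordan type of X is dominated by μ. -/
/-- Sum of the `r` largest elements of a multiset of naturals. -/
def topSum (s : Multiset ℕ) (r : ℕ) : ℕ :=
  (((s.sort (· ≤ ·)).reverse).take r).sum

/-- `a` dominates `b` (as partitions). -/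
def Dominates (a b : Multiset ℕ) : Prop := ∀ r : ℕ, topSum b r ≤ topSum a r

/-!
For a multiset `s` of naturals, the sum of its `r` largest elements is
`min_k (r * k + ∑ x ∈ s, (x - k))` (attained at `k` = the `(r+1)`-st largest element), so `a`
dominates `b` as soon as `∑ x ∈ b, (x - k) ≤ ∑ x ∈ a, (x - k)` for every `k`.

For the Jordan type `λ` of `X`, `∑ i, (λ i - k)` is the rank of `X ^ k`. Since `X` maps the span
of the first `t + 1` blocks into the span of the first `t`, every set `S` of blocks gives
`∑ i ∈ S, n i ≤ dim ker X ^ #S`. Taking for `S` the `k` largest blocks, the rank of `X ^ k` is at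
most the total size of the remaining blocks, which is `∑ j, (μ j - k)` for the conjugate `μ`.
-/

open Module Finset

theorem List.sum_take_le_mul_add_sum_map_tsub (L : List ℕ) (r k : ℕ) :
    (L.take r).sum ≤ r * k + (L.map (· - k)).sum := by
  induction L generalizing r with
  | nil => simp
  | cons a L ih =>
    cases r with
    | zero => simp
    | succ r =>
      simp only [List.take_succ_cons, List.sum_cons, List.map_cons, add_one_mul]
      have := ih r
      omega

theorem List.sum_take_eq_mul_add_sum_map_tsub {L : List ℕ} (hL : L.Pairwise (· ≥ ·)) (r : ℕ) :
    (L.take r).sum = r * L.getD r 0 + (L.map (· - L.getD r 0)).sum := by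
  induction L generalizing r with
  | nil => simp
  | cons a L ih =>
    rw [List.pairwise_cons] at hL
    cases r with
    | zero =>
      simp only [List.take_zero, List.sum_nil, List.getD_cons_zero, zero_mul, List.map_cons,
        List.sum_cons, tsub_self, zero_add]
      exact (List.sum_eq_zero (by simpa using fun x hx => Nat.sub_eq_zero_of_le (hL.1 x hx))).symm
    | succ r =>
      have hk : L.getD r 0 ≤ a := by
        by_cases h : r < L.length
        · rw [List.getD_eq_getElem _ _ h]; exact hL.1 _ (List.getElem_mem h)
        · rw [List.getD_eq_default _ _ (by omega)]; exact Nat.zero_le a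
      simp only [List.take_succ_cons, List.sum_cons, List.getD_cons_succ, List.map_cons,
        add_one_mul, ih hL.2 r]
      omega

theorem exists_sorted_list_topSum_eq (s : Multiset ℕ) :
    ∃ L : List ℕ, (L : Multiset ℕ) = s ∧ L.Pairwise (· ≥ ·) ∧ ∀ r, topSum s r = (L.take r).sum :=
  ⟨_, by simp, List.pairwise_reverse.2 (Multiset.pairwise_sort s _), fun _ => rfl⟩

theorem topSum_le_mul_add_sum_map_tsub (s : Multiset ℕ) (r k : ℕ) :
    topSum s r ≤ r * k + (s.map (· - k)).sum := by
  obtain ⟨L, rfl, -, hL⟩ := exists_sorted_list_topSum_eq s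
  rw [hL, Multiset.map_coe, Multiset.sum_coe]
  exact L.sum_take_le_mul_add_sum_map_tsub r k

theorem exists_topSum_eq_mul_add_sum_map_tsub (s : Multiset ℕ) (r : ℕ) :
    ∃ k, topSum s r = r * k + (s.map (· - k)).sum := by
  obtain ⟨L, rfl, hsorted, hL⟩ := exists_sorted_list_topSum_eq s
  rw [hL]
  exact ⟨L.getD r 0, by simpa using List.sum_take_eq_mul_add_sum_map_tsub hsorted r⟩

theorem dominates_of_forall_sum_map_tsub_le {a b : Multiset ℕ}
    (h : ∀ k, (b.map (· - k)).sum ≤ (a.map (· - k)).sum) : Dominates a b := by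
  intro r
  obtain ⟨k, hk⟩ := exists_topSum_eq_mul_add_sum_map_tsub a r
  calc topSum b r ≤ r * k + (b.map (· - k)).sum := topSum_le_mul_add_sum_map_tsub b r k
    _ ≤ r * k + (a.map (· - k)).sum := by gcongr; exact h k
    _ = topSum a r := hk.symm

theorem Finset.exists_subset_card_eq_forall_le {α β : Type*} [DecidableEq α] [LinearOrder β]
    (f : α → β) {s : Finset α} {k : ℕ} (hk : k ≤ #s) :
    ∃ t ⊆ s, #t = k ∧ ∀ x ∈ t, ∀ y ∈ s \ t, f y ≤ f x := by
  induction k with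
  | zero => exact ⟨∅, empty_subset s, card_empty, by simp⟩
  | succ k ih =>
    obtain ⟨t, hts, htk, htop⟩ := ih (by omega)
    have hne : (s \ t).Nonempty := by
      rw [← card_pos, card_sdiff_of_subset hts]; omega
    obtain ⟨a, ha, hmax⟩ := (s \ t).exists_max_image f hne
    have hat : a ∉ t := (mem_sdiff.1 ha).2
    refine ⟨insert a t, insert_subset (mem_sdiff.1 ha).1 hts,
      by rw [card_insert_of_notMem hat, htk], fun x hx y hy => ?_⟩
    rw [mem_sdiff, mem_insert, not_or] at hy
    rcases mem_insert.1 hx with rfl | hx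
    · exact hmax y (mem_sdiff.2 ⟨hy.1, hy.2.2⟩)
    · exact htop x hx y (mem_sdiff.2 ⟨hy.1, hy.2.2⟩)

theorem sum_eq_sum_card_filter_lt {ι : Type*} (s : Finset ι) (n : ι → ℕ) {N : ℕ}
    (hN : ∀ i ∈ s, n i ≤ N) : ∑ i ∈ s, n i = ∑ j : Fin N, #{i ∈ s | (j : ℕ) < n i} := by
  simp only [card_filter]
  rw [sum_comm]
  refine sum_congr rfl fun i hi => ?_
  rw [← card_filter, Fin.card_filter_val_lt, min_eq_right (hN i hi)]

theorem exists_card_le_sum_compl_le {ι : Type*} [Fintype ι] [DecidableEq ι] (n : ι → ℕ)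
    {N : ℕ} (hN : ∀ i, n i ≤ N) (k : ℕ) :
    ∃ S : Finset ι, #S ≤ k ∧
      ∑ i ∈ Sᶜ, n i ≤ ∑ j : Fin N, (#{i | (j : ℕ) + 1 ≤ n i} - k) := by
  obtain ⟨S, -, hS, htop⟩ :=
    exists_subset_card_eq_forall_le n (s := univ) (min_le_right k (Fintype.card ι))
  refine ⟨S, hS ▸ min_le_left _ _, ?_⟩
  rw [sum_eq_sum_card_filter_lt _ _ fun i _ => hN i]
  refine sum_le_sum fun j _ => ?_
  -- `S` holds the `k` largest parts: either all of them exceed `j`, or no part outside `S` does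
  suffices h : #{i ∈ Sᶜ | (j : ℕ) < n i} = 0 ∨
      k + #{i ∈ Sᶜ | (j : ℕ) < n i} ≤ #{i | (j : ℕ) + 1 ≤ n i} by omega
  by_cases hk : k ≤ Fintype.card ι
  swap
  · rw [min_eq_right (by omega), card_eq_iff_eq_univ] at hS
    simp [hS]
  rw [min_eq_left hk] at hS
  by_cases hall : ∀ i ∈ S, (j : ℕ) < n i
  · right
    rw [← hS, ← card_union_of_disjoint (disjoint_compl_right.mono_right (filter_subset _ _))]
    refine card_le_card (union_subset (fun i hi => ?_) (fun i hi => ?_)) <;>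
      simp_all
  · left
    push Not at hall
    obtain ⟨i₀, hi₀, hle⟩ := hall
    refine card_eq_zero.2 (filter_eq_empty_iff.2 fun i hi => ?_)
    have := htop i₀ hi₀ i (by simpa using hi)
    omega

def coordSubspace (R : Type*) [Semiring R] {ι : Type*} (s : Set ι) : Submodule R (ι → R) :=
  ⨅ i ∈ sᶜ, LinearMap.ker (LinearMap.proj i)

theorem mem_coordSubspace {R : Type*} [Semiring R] {ι : Type*} {s : Set ι} {v : ι → R} :
    v ∈ coordSubspace R s ↔ ∀ i ∉ s, v i = 0 := by
  simp [coordSubspace]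

theorem finrank_coordSubspace (R : Type*) [Ring R] [StrongRankCondition R] {ι : Type*} [Fintype ι]
    (s : Set ι) [DecidablePred (· ∈ s)] :
    finrank R (coordSubspace R s) = Fintype.card s :=
  (LinearMap.iInfKerProjEquiv R (fun _ => R) disjoint_compl_right
    (Set.union_compl_self s).ge).finrank_eq.trans (finrank_fintype_fun_eq_card R)

section Flag

variable {K M M₂ : Type*} [Field K] [AddCommGroup M] [Module K M] [FiniteDimensional K M]
  [AddCommGroup M₂] [Module K M₂] [FiniteDimensional K M₂]

theorem finrank_add_finrank_le_finrank_add_finrank_inf_comap (f : M →ₗ[K] M₂)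
    {A : Submodule K M} {B U : Submodule K M₂} (hA : A.map f ≤ B) (hU : U ≤ B) :
    finrank K A + finrank K U ≤ finrank K B + finrank K ↥(A ⊓ U.comap f) := by
  let U' : Submodule K B := U.comap B.subtype
  -- `A ⊓ f⁻¹ U` is the kernel of the induced map `A → B ⧸ U`
  let g : A →ₗ[K] B ⧸ U' :=
    U'.mkQ ∘ₗ (f.domRestrict A).codRestrict B fun x => hA ⟨x, x.2, rfl⟩
  have hker : LinearMap.ker g = (A ⊓ U.comap f).comap A.subtype := by
    ext x
    simp [g, U', Submodule.Quotient.mk_eq_zero]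
  have h1 := LinearMap.finrank_range_add_finrank_ker g
  have h2 : finrank K (LinearMap.ker g) = finrank K ↥(A ⊓ U.comap f) := by
    rw [hker]; exact (Submodule.comapSubtypeEquivOfLe inf_le_left).finrank_eq
  have h3 := Submodule.finrank_le (LinearMap.range g)
  have h4 := Submodule.finrank_quotient_add_finrank U'
  have h5 : finrank K U' = finrank K U := (Submodule.comapSubtypeEquivOfLe hU).finrank_eq
  omega

theorem sum_finrank_sub_le_finrank_ker_pow_inf (f : Module.End K M) {V : ℕ → Submodule K M}
    (hV : Monotone V) (hf : ∀ t, (V (t + 1)).map f ≤ V t) (S : Finset ℕ) {k : ℕ}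
    (hS : ∀ t ∈ S, t < k) :
    ∑ t ∈ S, (finrank K (V (t + 1)) - finrank K (V t)) ≤
      finrank K ↥(LinearMap.ker (f ^ #S) ⊓ V k) := by
  induction S using Finset.induction_on_max generalizing k with
  | empty => simp
  | insert a S hlt ih =>
    have ha : a ∉ S := fun h => (hlt a h).false
    have hak : a < k := hS a (mem_insert_self a S)
    have hstep := finrank_add_finrank_le_finrank_add_finrank_inf_comap f (hf a)
      (inf_le_right : LinearMap.ker (f ^ #S) ⊓ V a ≤ V a)
    have hsub : V (a + 1) ⊓ (LinearMap.ker (f ^ #S) ⊓ V a).comap f ≤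
        LinearMap.ker (f ^ (#S + 1)) ⊓ V k := by
      rintro v ⟨hv, hfv, -⟩
      exact ⟨by simpa [pow_succ] using hfv, hV hak hv⟩
    have hmono := Submodule.finrank_mono (hV (Nat.le_add_right a 1))
    rw [card_insert_of_notMem ha, sum_insert ha]
    have := ih hlt
    have := Submodule.finrank_mono hsub
    omega

end Flag

theorem Matrix.rank_add_finrank_ker_mulVecLin {K ι κ : Type*} [Field K] [Fintype κ]
    (A : Matrix ι κ K) : A.rank + finrank K (LinearMap.ker A.mulVecLin) = Fintype.card κ := by
  rw [Matrix.rank, LinearMap.finrank_range_add_finrank_ker, finrank_fintype_fun_eq_card]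

section JordanForm

open Matrix

def jordanMatrix (K : Type*) [Zero K] [One K] {m : ℕ} (lam : Fin m → ℕ) :
    Matrix (Σ i : Fin m, Fin (lam i)) (Σ i : Fin m, Fin (lam i)) K :=
  blockDiagonal' fun i => jordanBlock K (lam i)

variable {K : Type*} [Field K] {m : ℕ} {lam : Fin m → ℕ}

theorem jordanMatrix_mulVec (v : (Σ i : Fin m, Fin (lam i)) → K) (i : Fin m) (a : Fin (lam i)) :
    (jordanMatrix K lam *ᵥ v) ⟨i, a⟩ =
      if h : (a : ℕ) + 1 < lam i then v ⟨i, ⟨a + 1, h⟩⟩ else 0 := by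
  simp only [mulVec, dotProduct, jordanMatrix, jordanBlock, blockDiagonal'_apply, of_apply,
    dite_mul, ite_mul, one_mul, zero_mul, Fintype.sum_sigma, sum_dite_irrel, sum_const_zero,
    sum_dite_eq, mem_univ, ↓reduceIte, cast_eq]
  split_ifs with h
  · have hx : ∀ x : Fin (lam i), (a : ℕ) + 1 = x ↔ ⟨a + 1, h⟩ = x := fun x => by rw [Fin.ext_iff]
    simp only [hx, sum_ite_eq, mem_univ, if_true]
  · exact sum_eq_zero fun x _ => if_neg (by omega)

theorem jordanMatrix_pow_mulVec (k : ℕ) (v : (Σ i : Fin m, Fin (lam i)) → K) (i : Fin m)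
    (a : Fin (lam i)) :
    (jordanMatrix K lam ^ k *ᵥ v) ⟨i, a⟩ =
      if h : (a : ℕ) + k < lam i then v ⟨i, ⟨a + k, h⟩⟩ else 0 := by
  induction k generalizing v with
  | zero => simp
  | succ k ih =>
    rw [pow_succ, ← mulVec_mulVec, ih, ← add_assoc]
    split_ifs with h₁ h₂ h₂
    · rw [jordanMatrix_mulVec, dif_pos h₂]
    · rw [jordanMatrix_mulVec, dif_neg h₂]
    · omega
    · rfl

theorem ker_jordanMatrix_pow (k : ℕ) :
    LinearMap.ker (jordanMatrix K lam ^ k).mulVecLin =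
      coordSubspace K {q : Σ i : Fin m, Fin (lam i) | (q.2 : ℕ) < k} := by
  ext v
  simp only [LinearMap.mem_ker, mulVecLin_apply, mem_coordSubspace, Set.mem_ofPred_eq, not_lt]
  constructor
  · rintro hv ⟨i, b⟩ (hb : k ≤ (b : ℕ))
    have := congrFun hv ⟨i, ⟨b - k, by omega⟩⟩
    rw [jordanMatrix_pow_mulVec, dif_pos (by dsimp only; omega)] at this
    simpa [Nat.sub_add_cancel hb] using this
  · intro hv
    ext ⟨i, a⟩
    rw [jordanMatrix_pow_mulVec]
    split_ifs
    · exact hv _ (by simp)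
    · rfl

theorem rank_jordanMatrix_pow (k : ℕ) : (jordanMatrix K lam ^ k).rank = ∑ i, (lam i - k) := by
  have h := rank_add_finrank_ker_mulVecLin (jordanMatrix K lam ^ k)
  rw [ker_jordanMatrix_pow, finrank_coordSubspace, Fintype.card_subtype] at h
  rw [card_filter, Fintype.sum_sigma, Fintype.card_sigma] at h
  simp only [← card_filter, Set.mem_ofPred_eq, Fin.card_filter_val_lt,
    Fintype.card_fin] at h
  have : ∑ i, (lam i - k) + ∑ i, min (lam i) k = ∑ i, lam i := by
    rw [← sum_add_distrib]
    exact sum_congr rfl fun i _ => tsub_add_min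
  omega

theorem HasJordanType.rank_pow {ι : Type*} [Fintype ι] [DecidableEq ι] {X : Matrix ι ι K}
    (hX : HasJordanType X lam) (k : ℕ) : (X ^ k).rank = ∑ i, (lam i - k) := by
  obtain ⟨e, P, hP, hXP⟩ := hX
  have hconj : X ^ k * P = P * (jordanMatrix K lam ^ k).submatrix e e := by
    have hpow : (jordanMatrix K lam ^ k).submatrix e e = (jordanMatrix K lam).submatrix e e ^ k :=
      map_pow (reindexRingEquiv K e.symm) _ k
    rw [hpow]
    exact (SemiconjBy.pow_right hXP.symm k).symm
  rw [← rank_mul_eq_left_of_isUnit_det P _ hP, hconj, rank_mul_eq_right_of_isUnit_det P _ hP,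
    rank_submatrix, rank_jordanMatrix_pow]

end JordanForm

section BlockTriangular

open Matrix

def blockFlag (K : Type*) [Semiring K] {m : ℕ} (nn : Fin m → ℕ) (t : ℕ) :
    Submodule K ((Σ i : Fin m, Fin (nn i)) → K) :=
  coordSubspace K {p | (p.1 : ℕ) < t}

variable {K : Type*} [Field K] {m : ℕ} {nn : Fin m → ℕ}

theorem blockFlag_mono : Monotone (blockFlag K nn) := fun _ _ hst _ hv =>
  mem_coordSubspace.2 fun p hp => mem_coordSubspace.1 hv p fun h => hp (h.trans_le hst)

theorem finrank_blockFlag (t : ℕ) :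
    finrank K (blockFlag K nn t) = ∑ i : Fin m, if (i : ℕ) < t then nn i else 0 := by
  rw [blockFlag, finrank_coordSubspace, Fintype.card_subtype, card_filter, Fintype.sum_sigma]
  refine sum_congr rfl fun i _ => ?_
  split_ifs with h <;> simp [h]

theorem finrank_blockFlag_succ (i : Fin m) :
    finrank K (blockFlag K nn (i + 1)) = finrank K (blockFlag K nn i) + nn i := by
  have h : ∀ j : Fin m, (if (j : ℕ) < i + 1 then nn j else 0) =
      (if (j : ℕ) < i then nn j else 0) + if j = i then nn j else 0 := by
    intro j
    split_ifs <;> simp_all [Fin.ext_iff] <;> omega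
  simp only [finrank_blockFlag, h, sum_add_distrib, sum_ite_eq', mem_univ, if_true]

theorem map_blockFlag_succ_le {X : Matrix (Σ i : Fin m, Fin (nn i)) (Σ i : Fin m, Fin (nn i)) K}
    (hX : ∀ p q : Σ i : Fin m, Fin (nn i), q.1 ≤ p.1 → X p q = 0) (t : ℕ) :
    (blockFlag K nn (t + 1)).map X.mulVecLin ≤ blockFlag K nn t := by
  rintro _ ⟨v, hv, rfl⟩
  refine mem_coordSubspace.2 fun p hp => sum_eq_zero fun q _ => ?_
  change X p q * v q = 0
  by_cases hq : (q.1 : ℕ) < t + 1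
  · rw [hX p q (Fin.le_def.2 (by simp only [Set.mem_ofPred_eq, not_lt] at hp; omega)), zero_mul]
  · rw [mem_coordSubspace.1 hv q hq, mul_zero]

variable {X : Matrix (Σ i : Fin m, Fin (nn i)) (Σ i : Fin m, Fin (nn i)) K}

theorem sum_le_finrank_ker_pow (hX : ∀ p q : Σ i : Fin m, Fin (nn i), q.1 ≤ p.1 → X p q = 0)
    (S : Finset (Fin m)) :
    ∑ i ∈ S, nn i ≤ finrank K (LinearMap.ker (X ^ #S).mulVecLin) := by
  have h := sum_finrank_sub_le_finrank_ker_pow_inf X.mulVecLin blockFlag_mono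
    (map_blockFlag_succ_le hX) (S.map Fin.valEmbedding) (k := m) (by simp)
  have hsum : ∑ t ∈ S.map Fin.valEmbedding,
      (finrank K (blockFlag K nn (t + 1)) - finrank K (blockFlag K nn t)) = ∑ i ∈ S, nn i := by
    rw [sum_map]
    exact sum_congr rfl fun i _ => by
      rw [Fin.valEmbedding_apply, finrank_blockFlag_succ, add_tsub_cancel_left]
  rw [hsum, card_map] at h
  have hpow : (X ^ #S).mulVecLin = X.mulVecLin ^ #S := toLin'_pow X #S
  exact h.trans (Submodule.finrank_mono (hpow ▸ inf_le_left))

theorem rank_pow_le_sum_compl (hX : ∀ p q : Σ i : Fin m, Fin (nn i), q.1 ≤ p.1 → X p q = 0)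
    {S : Finset (Fin m)} {k : ℕ} (hk : #S ≤ k) :
    (X ^ k).rank ≤ ∑ i ∈ Sᶜ, nn i := by
  have h₁ := rank_add_finrank_ker_mulVecLin (X ^ #S)
  have h₂ := sum_le_finrank_ker_pow hX S
  have h₃ := sum_add_sum_compl S nn
  simp only [Fintype.card_sigma, Fintype.card_fin] at h₁
  calc (X ^ k).rank = (X ^ (k - #S) * X ^ #S).rank := by rw [pow_sub_mul_pow X hk]
    _ ≤ (X ^ #S).rank := rank_mul_le_right _ _
    _ ≤ ∑ i ∈ Sᶜ, nn i := by omega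

end BlockTriangular

theorem stmt_13_general (K : Type*) [Field K] (m N : ℕ) (nn : Fin m → ℕ)
    (hsum : ∑ i, nn i = N)
    (X : Matrix (Σ i : Fin m, Fin (nn i)) (Σ i : Fin m, Fin (nn i)) K)
    (hX : ∀ p q : Σ i : Fin m, Fin (nn i), q.1 ≤ p.1 → X p q = 0)
    (m' : ℕ) (lam : Fin m' → ℕ) (hJT : HasJordanType X lam) :
    Dominates
      (Multiset.map
        (fun j : Fin N => (Finset.univ.filter fun i : Fin m => (j : ℕ) + 1 ≤ nn i).card)
        Finset.univ.val)
      (Multiset.map lam Finset.univ.val) := by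
  refine dominates_of_forall_sum_map_tsub_le fun k => ?_
  obtain ⟨S, hSk, hS⟩ :=
    exists_card_le_sum_compl_le nn (fun i => hsum ▸ single_le_sum (by simp) (mem_univ i)) k
  calc ((Multiset.map lam univ.val).map (· - k)).sum = ∑ i, (lam i - k) := by
        rw [Multiset.map_map]; rfl
    _ = (X ^ k).rank := (hJT.rank_pow k).symm
    _ ≤ ∑ i ∈ Sᶜ, nn i := rank_pow_le_sum_compl hX hSk
    _ ≤ _ := hS
    _ = _ := by rw [Multiset.map_map]; rfl

/-- the Jordan type of any strictly block upper triangular matrix with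
block sizes `nn 0, …, nn (m-1)` is dominated by the conjugate `μ` of the sorted tuple
`nn`, where `μ_j = #{i : nn i ≥ j}` (padded with zero parts, which do not affect
dominance). -/
theorem stmt_13 (K : Type*) [Field K] (m N : ℕ) (nn : Fin m → ℕ)
    (hpos : ∀ i, 0 < nn i) (hsum : ∑ i, nn i = N)
    (X : Matrix (Σ i : Fin m, Fin (nn i)) (Σ i : Fin m, Fin (nn i)) K)
    (hX : ∀ p q : Σ i : Fin m, Fin (nn i), q.1 ≤ p.1 → X p q = 0)
    (m' : ℕ) (lam : Fin m' → ℕ) (hJT : HasJordanType X lam) :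
    Dominates
      (Multiset.map
        (fun j : Fin N => (Finset.univ.filter fun i : Fin m => (j : ℕ) + 1 ≤ nn i).card)
        Finset.univ.val)
      (Multiset.map lam Finset.univ.val) :=
  stmt_13_general K m N nn hsum X hX m' lam hJT
end

section
/- For a partition λ of n, define D(λ, n) = n² − ∑_j (λ^t_j)², where λ^t is the conjugate partition. Let 1 ≤ r < n and let a = (a_1, …, a_m) be a partition of n − r (parts a_i ≥ 0 allowed). Then D((r, a_1, …, a_m), n)/2 = D(a, n−r)/2 + (r−1)n − r(r−1)/2 + ∑_{i=1}^m max(a_i − r, 0), where (r, a_1, …, a_m) denotes the partition of n with parts r, a_1, …, a_m. -/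
/-- `conjCount ν j` is the `j`-th part of the conjugate partition of `ν`:
`#{i : ν i ≥ j}`. -/
def conjCount {m : ℕ} (ν : Fin m → ℕ) (j : ℕ) : ℕ :=
  (Finset.univ.filter fun i => j ≤ ν i).card

/-- `orbitDim n ν = n² - ∑_j (ν^t_j)²`, the dimension of the nilpotent `GL_n`-orbit of
Jordan type `ν` (for `ν` a partition of `n`). -/
def orbitDim (n : ℕ) {m : ℕ} (ν : Fin m → ℕ) : ℚ :=
  (n : ℚ) ^ 2 - ∑ j ∈ Finset.Icc 1 n, (conjCount ν j : ℚ) ^ 2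

lemma conjCount_eq_sum {m : ℕ} (ν : Fin m → ℕ) (j : ℕ) :
    conjCount ν j = ∑ i, if j ≤ ν i then 1 else 0 := by
  rw [conjCount, Finset.card_filter]

lemma conjCount_cons {m : ℕ} (r : ℕ) (a : Fin m → ℕ) (j : ℕ) :
    conjCount (Fin.cons r a) j = (if j ≤ r then 1 else 0) + conjCount a j := by
  rw [conjCount_eq_sum, conjCount_eq_sum, Fin.sum_univ_succ]
  simp

/-- the half-dimension identity
`D((r,a),n)/2 = D(a,n-r)/2 + (r-1)n - r(r-1)/2 + ∑ max(a_i - r, 0)`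
for `1 ≤ r < n` and `a` a partition of `n - r`. -/
theorem stmt_14 (n r : ℕ) (hr1 : 1 ≤ r) (hrn : r < n) (m : ℕ) (a : Fin m → ℕ)
    (hsum : ∑ i, a i = n - r) :
    orbitDim n (Fin.cons r a) / 2 =
      orbitDim (n - r) a / 2 + ((r : ℚ) - 1) * (n : ℚ) -
        (r : ℚ) * ((r : ℚ) - 1) / 2 + ∑ i, ((a i - r : ℕ) : ℚ) := by
  have hale : ∀ i, a i ≤ n - r := by
    intro i
    rw [← hsum]
    exact Finset.single_le_sum (fun j _ => Nat.zero_le _) (Finset.mem_univ i)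
  have hb0 : ∀ j, n - r < j → conjCount a j = 0 := by
    intro j hj
    rw [conjCount, Finset.card_eq_zero, Finset.filter_eq_empty_iff]
    intro i _
    have := hale i
    omega
  -- split the big sum
  have hsplit : ∑ j ∈ Finset.Icc 1 n, (conjCount (Fin.cons r a) j : ℚ) ^ 2 =
      ∑ j ∈ Finset.Icc 1 n, (conjCount a j : ℚ) ^ 2 +
        ∑ j ∈ Finset.Icc 1 n, (if j ≤ r then 2 * (conjCount a j : ℚ) + 1 else 0) := by
    rw [← Finset.sum_add_distrib]
    refine Finset.sum_congr rfl fun j _ => ?_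
    rw [conjCount_cons]
    split <;> push_cast <;> ring
  have hsub : ∑ j ∈ Finset.Icc 1 n, (conjCount a j : ℚ) ^ 2 =
      ∑ j ∈ Finset.Icc 1 (n - r), (conjCount a j : ℚ) ^ 2 := by
    refine (Finset.sum_subset (Finset.Icc_subset_Icc_right (Nat.sub_le n r)) ?_).symm
    intro j hj hj'
    simp only [Finset.mem_Icc] at hj hj'
    rw [hb0 j (by omega)]
    norm_num
  have hif : ∑ j ∈ Finset.Icc 1 n, (if j ≤ r then 2 * (conjCount a j : ℚ) + 1 else 0) =
      ∑ j ∈ Finset.Icc 1 r, (2 * (conjCount a j : ℚ) + 1) := by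
    have h : ∑ j ∈ Finset.Icc 1 r, (if j ≤ r then 2 * (conjCount a j : ℚ) + 1 else 0) =
        ∑ j ∈ Finset.Icc 1 n, (if j ≤ r then 2 * (conjCount a j : ℚ) + 1 else 0) := by
      refine Finset.sum_subset (Finset.Icc_subset_Icc_right hrn.le) ?_
      intro j hj hj'
      simp only [Finset.mem_Icc] at hj hj'
      rw [if_neg (by omega)]
    rw [← h]
    refine Finset.sum_congr rfl fun j hj => ?_
    simp only [Finset.mem_Icc] at hj
    rw [if_pos hj.2]
  have hmin : ∑ j ∈ Finset.Icc 1 r, conjCount a j = ∑ i, min (a i) r := by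
    simp only [conjCount_eq_sum]
    rw [Finset.sum_comm]
    refine Finset.sum_congr rfl fun i _ => ?_
    rw [← Finset.card_filter]
    have : (Finset.Icc 1 r).filter (fun j => j ≤ a i) = Finset.Icc 1 (min (a i) r) := by
      ext j
      simp only [Finset.mem_filter, Finset.mem_Icc]
      omega
    rw [this]
    simp [Nat.card_Icc]
  have hmin2 : ∀ i, min (a i) r + (a i - r) = a i := fun i => by omega
  have hNat : ((∑ i, min (a i) r) + ∑ i, (a i - r)) = n - r := by
    rw [← Finset.sum_add_distrib]
    simp_rw [hmin2]
    exact hsum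
  have hS : (∑ i, ((min (a i) r : ℕ) : ℚ)) + ∑ i, ((a i - r : ℕ) : ℚ) = ((n - r : ℕ) : ℚ) := by
    exact_mod_cast congrArg (Nat.cast : ℕ → ℚ) hNat
  have hnr : ((n - r : ℕ) : ℚ) = (n : ℚ) - (r : ℚ) := by
    push_cast [Nat.cast_sub hrn.le]; ring
  have hminQ : ∑ j ∈ Finset.Icc 1 r, (conjCount a j : ℚ) = ∑ i, ((min (a i) r : ℕ) : ℚ) := by
    rw [← Nat.cast_sum, hmin, Nat.cast_sum]
  rw [orbitDim, orbitDim, hsplit, hsub, hif]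
  have hexp : ∑ j ∈ Finset.Icc 1 r, (2 * (conjCount a j : ℚ) + 1) =
      2 * (∑ i, ((min (a i) r : ℕ) : ℚ)) + r := by
    rw [Finset.sum_add_distrib, ← Finset.mul_sum, hminQ]
    simp [Nat.card_Icc]
  rw [hexp]
  have h1 : ∑ i, ((min (a i) r : ℕ) : ℚ) = ((n : ℚ) - r) - ∑ i, ((a i - r : ℕ) : ℚ) := by
    rw [← hnr]; linarith [hS]
  rw [h1, hnr]
  ring
end

section
/- Let k ≥ 1 and a_1 ≥ … ≥ a_m ≥ 1 be integers with n = a_1 + … + a_m, and let A be the set of partitions of k+n of the form (k', a'_1, …, a'_m) with 0 ≤ a'_i ≤ a_i and k' = k + n − ∑_i a'_i (note automatically k' ≥ k). Then A has a minimum element with respect to the dominance order; equivalently, A has a unique minimal element. -/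
open Finset

namespace List

theorem sum_take_le_mul_add_sum_tsub (l : List ℕ) (r c : ℕ) :
    (l.take r).sum ≤ r * c + (l.map (· - c)).sum := by
  induction l generalizing r with
  | nil => simp
  | cons x l ih =>
    cases r with
    | zero => simp
    | succ r =>
      simp only [take_succ_cons, sum_cons, map_cons]
      have := ih r
      rw [Nat.succ_mul]
      omega

theorem sum_take_succ_le_add_sum_take {l : List ℕ} {x : ℕ} (hx : ∀ y ∈ l, y ≤ x) (r : ℕ) :
    (l.take (r + 1)).sum ≤ x + (l.take r).sum := by
  rw [take_add_one, sum_append]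
  cases h : l[r]? with
  | none => simp
  | some y => simpa [add_comm] using hx y (mem_of_getElem? h)

theorem sum_le_sum_take_of_pairwise_ge {l : List ℕ} (hl : l.Pairwise (· ≥ ·))
    {t : Multiset ℕ} (ht : t ≤ l) {r : ℕ} (hr : Multiset.card t ≤ r) :
    t.sum ≤ (l.take r).sum := by
  induction l generalizing t r with
  | nil => simp [Multiset.le_zero.mp ht]
  | cons x l ih =>
    obtain ⟨hx, hl⟩ := pairwise_cons.mp hl
    cases r with
    | zero => simp [Multiset.card_eq_zero.mp (Nat.le_zero.mp hr)]
    | succ r =>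
      rw [take_succ_cons, sum_cons]
      by_cases hxt : x ∈ t
      · obtain ⟨t', rfl⟩ := Multiset.exists_cons_of_mem hxt
        rw [Multiset.sum_cons]
        have ht' : t' ≤ l := (Multiset.cons_le_cons_iff x).mp ht
        have := ih hl ht' (by simpa using hr)
        omega
      · calc t.sum ≤ (l.take (r + 1)).sum := ih hl ((Multiset.le_cons_of_notMem hxt).mp ht) hr
          _ ≤ x + (l.take r).sum := sum_take_succ_le_add_sum_take hx r

end List

theorem topSum_le_mul_add_sum_tsub (s : Multiset ℕ) (r c : ℕ) :
    topSum s r ≤ r * c + (s.map (· - c)).sum := by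
  conv_rhs => rw [← Multiset.sort_eq s (· ≤ ·), ← Multiset.coe_reverse]
  exact List.sum_take_le_mul_add_sum_tsub _ r c

theorem topSum_le_sum (s : Multiset ℕ) (r : ℕ) : topSum s r ≤ s.sum := by
  simpa using topSum_le_mul_add_sum_tsub s r 0

theorem topSum_le_mul {s : Multiset ℕ} {c : ℕ} (hs : ∀ x ∈ s, x ≤ c) (r : ℕ) :
    topSum s r ≤ r * c := by
  have h0 : (s.map (· - c)).sum = 0 :=
    Multiset.sum_eq_zero fun y hy => by
      obtain ⟨x, hx, rfl⟩ := Multiset.mem_map.mp hy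
      exact Nat.sub_eq_zero_of_le (hs x hx)
  simpa [h0] using topSum_le_mul_add_sum_tsub s r c

theorem sum_le_topSum {s t : Multiset ℕ} (ht : t ≤ s) {r : ℕ} (hr : Multiset.card t ≤ r) :
    t.sum ≤ topSum s r := by
  have hl : ((s.sort (· ≤ ·)).reverse).Pairwise (· ≥ ·) :=
    List.pairwise_reverse.mpr (Multiset.pairwise_sort s _)
  refine List.sum_le_sum_take_of_pairwise_ge hl ?_ hr
  rwa [Multiset.coe_reverse, Multiset.sort_eq]

def capPartition {m : ℕ} (N : ℕ) (a' : Fin m → ℕ) : Multiset ℕ :=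
  (N - ∑ i, a' i) ::ₘ (Multiset.map a' Finset.univ.val).filter fun x => 0 < x

section CapPartition

variable {m : ℕ} (N : ℕ) (a' : Fin m → ℕ)

theorem capPartition_eq :
    capPartition N a' = (N - ∑ i, a' i) ::ₘ ({i | 0 < a' i} : Finset (Fin m)).val.map a' := by
  rw [capPartition, Multiset.filter_map]
  rfl

theorem sum_filter_pos (T : Finset (Fin m)) : ∑ i ∈ T with 0 < a' i, a' i = ∑ i ∈ T, a' i :=
  sum_filter_of_ne fun _ _ h => Nat.pos_of_ne_zero h

theorem sum_capPartition : (capPartition N a').sum = N - ∑ i, a' i + ∑ i, a' i := by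
  rw [capPartition_eq, Multiset.sum_cons, ← sum_filter_pos a' univ]
  rfl

theorem mem_capPartition {x : ℕ} (hx : x ∈ capPartition N a') :
    x = N - ∑ i, a' i ∨ ∃ i, x = a' i := by
  rw [capPartition_eq, Multiset.mem_cons, Multiset.mem_map] at hx
  rcases hx with hx | ⟨i, -, rfl⟩
  exacts [Or.inl hx, Or.inr ⟨i, rfl⟩]

theorem cons_filter_pos_le_capPartition (T : Finset (Fin m)) :
    (N - ∑ i, a' i) ::ₘ ({i ∈ T | 0 < a' i}).val.map a' ≤ capPartition N a' := by
  rw [capPartition_eq]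
  exact Multiset.cons_le_cons _
    (Multiset.map_le_map (val_le_iff.mpr (filter_subset_filter _ (subset_univ T))))

theorem sum_le_topSum_capPartition {T : Finset (Fin m)} {r : ℕ} (hT : #T ≤ r) :
    ∑ i ∈ T, a' i ≤ topSum (capPartition N a') r := by
  rw [← sum_filter_pos, sum_eq_multiset_sum]
  refine sum_le_topSum
    ((Multiset.le_cons_self _ _).trans (cons_filter_pos_le_capPartition N a' T)) ?_
  exact (Multiset.card_map _ _).trans_le ((card_filter_le T _).trans hT)

theorem sub_sum_compl_le_topSum_capPartition {T : Finset (Fin m)} {r : ℕ} (hT : #T < r) :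
    N - ∑ i ∈ Tᶜ, a' i ≤ topSum (capPartition N a') r := by
  have hcard : Multiset.card ((N - ∑ i, a' i) ::ₘ ({i ∈ T | 0 < a' i}).val.map a') ≤ r := by
    rw [Multiset.card_cons, Multiset.card_map]
    exact (card_filter_le T _).trans_lt hT
  have hsum := sum_le_topSum (cons_filter_pos_le_capPartition N a' T) hcard
  rw [Multiset.sum_cons, ← sum_eq_multiset_sum, sum_filter_pos] at hsum
  have hsplit := sum_add_sum_compl T a'
  omega

end CapPartition

theorem topSum_capPartition_succ_le {m : ℕ} (N : ℕ) {b : Fin m → ℕ} (hb : Antitone b) (q : Fin m)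
    (hq : b q ≤ N - ∑ i, b i) :
    topSum (capPartition N b) (q + 1) ≤ N - ∑ i, b i + ∑ i ∈ Iio q, b i := by
  -- the threshold `b q` separates the `q + 1` largest parts from the others
  have h := topSum_le_mul_add_sum_tsub (capPartition N b) (q + 1) (b q)
  have hparts : ∑ i ∈ {i | 0 < b i}, (b i - b q) = ∑ i ∈ Iio q, (b i - b q) := by
    rw [sum_filter_of_ne fun _ _ h => Nat.pos_of_ne_zero (by omega)]
    refine (sum_subset (subset_univ _) fun i _ hi => ?_).symm
    exact Nat.sub_eq_zero_of_le (hb (not_lt.mp (by simpa using hi)))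
  have hhead : ∑ i ∈ Iio q, (b i - b q) = ∑ i ∈ Iio q, b i - q * b q := by
    rw [sum_tsub_distrib _ fun i hi => hb (mem_Iio.mp hi).le, sum_const, Fin.card_Iio,
      smul_eq_mul]
  have hqb : q * b q ≤ ∑ i ∈ Iio q, b i := by
    simpa [Fin.card_Iio] using card_nsmul_le_sum (Iio q) b (b q) fun i hi => hb (mem_Iio.mp hi).le
  have hexcess : ((capPartition N b).map (· - b q)).sum
      = N - ∑ i, b i - b q + (∑ i ∈ Iio q, b i - q * b q) := by
    rw [capPartition_eq, Multiset.map_cons, Multiset.sum_cons, Multiset.map_map,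
      ← sum_eq_multiset_sum, Function.comp_def, hparts, hhead]
  rw [hexcess, add_one_mul] at h
  omega

theorem Finset.exists_superset_card_eq_sum_le {ι : Type*} [DecidableEq ι] {f : ι → ℕ} {v : ℕ}
    (hf : ∀ i, f i ≤ v) {P F : Finset ι} (hP : ∀ i ∈ P, f i = v) (hPF : #P ≤ #F) :
    ∃ T, P ⊆ T ∧ #T = #F ∧ ∑ i ∈ F, f i ≤ ∑ i ∈ T, f i := by
  obtain ⟨S, hS, hScard⟩ := exists_subset_card_eq (s := F \ P) (n := #F - #P)
    (by have := le_card_sdiff P F; omega)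
  have hSF : S ⊆ F := hS.trans sdiff_subset
  have hPS : Disjoint P S := disjoint_of_subset_right hS disjoint_sdiff
  refine ⟨P ∪ S, subset_union_left, by rw [card_union_of_disjoint hPS]; omega, ?_⟩
  -- the elements of `F \ S` are exchanged for those of `P`, on which `f` is maximal
  calc ∑ i ∈ F, f i = ∑ i ∈ F \ S, f i + ∑ i ∈ S, f i := (sum_sdiff hSF).symm
    _ ≤ #(F \ S) • v + ∑ i ∈ S, f i := by gcongr; exact sum_le_card_nsmul _ _ _ fun i _ => hf i
    _ = ∑ i ∈ P, f i + ∑ i ∈ S, f i := by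
        rw [card_sdiff_of_subset hSF, sum_congr rfl hP, sum_const, hScard]
        congr 2
        omega
    _ = ∑ i ∈ P ∪ S, f i := (sum_union hPS).symm

theorem sum_min_succ {m : ℕ} (a : Fin m → ℕ) (v : ℕ) :
    ∑ i, min (a i) (v + 1) = ∑ i, min (a i) v + #{i | v < a i} := by
  rw [card_filter, ← sum_add_distrib]
  refine sum_congr rfl fun i _ => ?_
  split <;> omega

theorem exists_waterLevel {m : ℕ} (a : Fin m → ℕ) (N : ℕ) :
    ∃ v ρ, v + ∑ i, min (a i) v + ρ = N ∧ ρ ≤ #{i | v < a i} := by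
  let fits : ℕ → Prop := fun t => t + ∑ i, min (a i) t ≤ N
  set v := Nat.findGreatest fits N
  have hv : fits v := Nat.findGreatest_spec (Nat.zero_le N) (by simp [fits])
  have hv' : ¬ fits (v + 1) := by
    by_cases h : v + 1 ≤ N
    · exact Nat.findGreatest_is_greatest (Nat.lt_succ_self v) h
    · simp only [fits]
      omega
  refine ⟨v, N - (v + ∑ i, min (a i) v), by omega, ?_⟩
  simp only [fits, sum_min_succ] at hv hv'
  omega

theorem Antitone.lt_of_lt_card_filter {m t : ℕ} {a : Fin m → ℕ} (ha : Antitone a) {i : Fin m}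
    (hi : (i : ℕ) < #{j | t < a j}) : t < a i := by
  by_contra! hai
  have hsub : ({j | t < a j} : Finset (Fin m)) ⊆ Iio i := fun j hj => by
    simp only [mem_filter, mem_univ, true_and] at hj
    exact mem_Iio.mpr (lt_of_not_ge fun hij => (ha hij).not_gt (hai.trans_lt hj))
  have := card_le_card hsub
  rw [Fin.card_Iio] at this
  omega

/-- The capped parts of the minimum: every part is filled up to the level `v`, and the surplus
`ρ` is spread one unit each over the uncapped part and the first `ρ - 1` capped ones. -/
def waterFill {m : ℕ} (a : Fin m → ℕ) (v ρ : ℕ) (i : Fin m) : ℕ :=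
  min (a i) (v + if (i : ℕ) < ρ - 1 then 1 else 0)

section WaterFill

variable {m : ℕ} {a : Fin m → ℕ} {v ρ : ℕ}

theorem waterFill_le (i : Fin m) : waterFill a v ρ i ≤ a i := min_le_left _ _

theorem min_le_waterFill (i : Fin m) : min (a i) v ≤ waterFill a v ρ i :=
  min_le_min_left _ (Nat.le_add_right _ _)

theorem waterFill_le_succ (i : Fin m) : waterFill a v ρ i ≤ v + 1 :=
  (min_le_right _ _).trans (by split <;> omega)

theorem antitone_waterFill (ha : Antitone a) : Antitone (waterFill a v ρ) :=
  ha.min fun i j hij => by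
    have : (i : ℕ) ≤ j := hij
    split <;> split <;> omega

theorem sum_waterFill (ha : Antitone a) (hρ : ρ ≤ #{i | v < a i}) :
    ∑ i, waterFill a v ρ i = ∑ i, min (a i) v + (ρ - 1) := by
  have hfill : ∀ i, waterFill a v ρ i = min (a i) v + if (i : ℕ) < ρ - 1 then 1 else 0 := by
    intro i
    have := ha.lt_of_lt_card_filter (i := i) (t := v)
    unfold waterFill
    split <;> omega
  have hρm : ρ - 1 ≤ m := by
    have := card_filter_le (univ : Finset (Fin m)) fun i => v < a i
    rw [card_univ, Fintype.card_fin] at this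
    omega
  rw [sum_congr rfl fun i _ => hfill i, sum_add_distrib, sum_boole, Fin.card_filter_val_lt]
  simp [hρm]

end WaterFill

section MinimalPartition

variable {m : ℕ} {a : Fin m → ℕ} {v ρ N : ℕ}

theorem sum_waterFill_le (ha : Antitone a) (hN : v + ∑ i, min (a i) v + ρ = N)
    (hρ : ρ ≤ #{i | v < a i}) : ∑ i, waterFill a v ρ i ≤ N := by
  rw [sum_waterFill ha hρ]
  omega

theorem topSum_capPartition_waterFill_le_mul (ha : Antitone a)
    (hN : v + ∑ i, min (a i) v + ρ = N) (hρ : ρ ≤ #{i | v < a i}) (r : ℕ) :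
    topSum (capPartition N (waterFill a v ρ)) r ≤ r * (v + 1) := by
  refine topSum_le_mul (fun x hx => ?_) r
  rcases mem_capPartition _ _ hx with rfl | ⟨i, rfl⟩
  · rw [sum_waterFill ha hρ]
    omega
  · exact waterFill_le_succ i

theorem topSum_capPartition_waterFill_le (ha : Antitone a)
    (hN : v + ∑ i, min (a i) v + ρ = N) (hρ : ρ ≤ #{i | v < a i}) (r : ℕ) :
    topSum (capPartition N (waterFill a v ρ)) r ≤ N := by
  refine (topSum_le_sum _ r).trans_eq ?_
  rw [sum_capPartition]
  have := sum_waterFill_le ha hN hρ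
  omega

theorem topSum_capPartition_waterFill_succ_le (ha : Antitone a)
    (hN : v + ∑ i, min (a i) v + ρ = N) (hρ : ρ ≤ #{i | v < a i}) (q : Fin m) :
    topSum (capPartition N (waterFill a v ρ)) (q + 1) ≤ v + ρ + ∑ i ∈ Iio q, min (a i) v := by
  have hsum := sum_waterFill ha hρ
  have hq : waterFill a v ρ q ≤ N - ∑ i, waterFill a v ρ i := by
    have : waterFill a v ρ q ≤ v + if (q : ℕ) < ρ - 1 then 1 else 0 := min_le_right _ _
    split at this <;> omega
  have hcompl : ∑ i ∈ (Iio q)ᶜ, min (a i) v ≤ ∑ i ∈ (Iio q)ᶜ, waterFill a v ρ i :=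
    sum_le_sum fun i _ => min_le_waterFill i
  have hsplit := sum_add_sum_compl (Iio q) (waterFill a v ρ)
  have hsplit' := sum_add_sum_compl (Iio q) fun i => min (a i) v
  have := topSum_capPartition_succ_le N (antitone_waterFill ha) q hq
  omega

theorem dominates_capPartition_waterFill (ha : Antitone a)
    (hN : v + ∑ i, min (a i) v + ρ = N) (hρ : ρ ≤ #{i | v < a i})
    {a' : Fin m → ℕ} (ha' : ∀ i, a' i ≤ a i) :
    Dominates (capPartition N a') (capPartition N (waterFill a v ρ)) := by
  intro r
  set P : Finset (Fin m) := {i | v < a' i}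
  have hP : ∀ i ∈ P, min (a i) v = v := fun i hi =>
    min_eq_right ((mem_filter.mp hi).2.trans_le (ha' i)).le
  rcases le_or_gt r #P with hrP | hPr
  · obtain ⟨P', hP', rfl⟩ := exists_subset_card_eq hrP
    calc topSum _ #P' ≤ #P' * (v + 1) := topSum_capPartition_waterFill_le_mul ha hN hρ _
      _ = ∑ _i ∈ P', (v + 1) := by rw [sum_const, smul_eq_mul]
      _ ≤ ∑ i ∈ P', a' i := sum_le_sum fun i hi => (mem_filter.mp (hP' hi)).2
      _ ≤ topSum (capPartition N a') #P' := sum_le_topSum_capPartition N a' le_rfl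
  rcases lt_or_ge m r with hmr | hrm
  · calc topSum _ r ≤ N := topSum_capPartition_waterFill_le ha hN hρ r
      _ = N - ∑ i ∈ univᶜ, a' i := by simp
      _ ≤ topSum (capPartition N a') r :=
        sub_sum_compl_le_topSum_capPartition N a' (by simpa using hmr)
  obtain ⟨q, rfl⟩ : ∃ q : Fin m, r = q + 1 := ⟨⟨r - 1, by omega⟩, by simp only; omega⟩
  obtain ⟨T, hPT, hT, hFT⟩ := exists_superset_card_eq_sum_le (f := fun i => min (a i) v)
    (fun i => min_le_right _ _) hP (F := Iio q) (by rw [Fin.card_Iio]; omega)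
  have hcompl : ∑ i ∈ Tᶜ, a' i ≤ ∑ i ∈ Tᶜ, min (a i) v := sum_le_sum fun i hi =>
    le_min (ha' i) (not_lt.mp fun h => mem_compl.mp hi (hPT (by simpa [P] using h)))
  have hsplit := sum_add_sum_compl T fun i => min (a i) v
  calc topSum _ (q + 1) ≤ v + ρ + ∑ i ∈ Iio q, min (a i) v :=
        topSum_capPartition_waterFill_succ_le ha hN hρ q
    _ ≤ N - ∑ i ∈ Tᶜ, a' i := by omega
    _ ≤ topSum (capPartition N a') (q + 1) :=
        sub_sum_compl_le_topSum_capPartition N a' (by rw [hT, Fin.card_Iio]; omega)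

end MinimalPartition

theorem stmt_18_general (k n m : ℕ) (a : Fin m → ℕ) (hanti : Antitone a) :
    let A : Set (Multiset ℕ) := {s | ∃ a' : Fin m → ℕ, (∀ i, a' i ≤ a i) ∧
      s = (k + n - ∑ i, a' i) ::ₘ
        ((Multiset.map a' Finset.univ.val).filter fun x => 0 < x)}
    ∃ s₀ ∈ A, ∀ s ∈ A, Dominates s s₀ := by
  intro A
  obtain ⟨v, ρ, hN, hρ⟩ := exists_waterLevel a (k + n)
  refine ⟨capPartition (k + n) (waterFill a v ρ), ⟨_, waterFill_le, rfl⟩, ?_⟩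
  rintro s ⟨a', ha', rfl⟩
  exact dominates_capPartition_waterFill hanti hN hρ ha'

/-- if `a_1 ≥ … ≥ a_m ≥ 1` and `n = ∑ a_i`, the set `A` of partitions
`(k', a'_1, …, a'_m)` of `k + n` with `0 ≤ a'_i ≤ a_i` and `k' = k + n - ∑ a'_i`
(zero parts discarded) has a minimum element for the dominance order. -/
theorem stmt_18 (k n m : ℕ) (hk : 1 ≤ k) (a : Fin m → ℕ) (hpos : ∀ i, 1 ≤ a i)
    (hanti : Antitone a) (hn : ∑ i, a i = n) :
    let A : Set (Multiset ℕ) := {s | ∃ a' : Fin m → ℕ, (∀ i, a' i ≤ a i) ∧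
      s = (k + n - ∑ i, a' i) ::ₘ
        ((Multiset.map a' Finset.univ.val).filter fun x => 0 < x)}
    ∃ s₀ ∈ A, ∀ s ∈ A, Dominates s s₀ :=
  stmt_18_general k n m a hanti
end
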